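/- Let β ≥ 1, α < β + 1 and λ ≠ 0, and set c = −α/(2β) + 1/(2β) + 1/2 and e = 2c = −α/β + 1/β + 1. Then for all real x > 0, ₁F₂(c; c+1, 3/2; λ²x^{2β}/4) = (1/2)[ ₂F₂(1, e; 2, e+1; λx^β) + ₂F₂(1, e; 2, e+1; −λx^β) ], where ₁F₂ and ₂F₂ are given by their defining power series with Pochhammer coefficients. -/

import Mathlib

/-! After the Pochhammer ratios cancel, the `n`-th term of `₂F₂(1, e; 2, e+1; w)` is
`e / ((e + n) (n + 1)!) · wⁿ` and the `k`-th term of `₁F₂(c; c+1, 3/2; z²/4)` is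
`c / ((c + k) (2k + 1)!) · z²ᵏ`, using `(3/2)ₖ 4ᵏ k! = (2k + 1)!`. Averaging the `₂F₂` series at
`±z` keeps its even terms, and for `e = 2c` its `2k`-th term is the `k`-th term of the `₁F₂`. -/

noncomputable def poch (a : ℝ) (n : ℕ) : ℝ := ∏ i ∈ Finset.range n, (a + (i : ℝ))

open Nat

lemma poch_succ (a : ℝ) (n : ℕ) : poch a (n + 1) = poch a n * (a + n) :=
  Finset.prod_range_succ _ _

lemma poch_pos {a : ℝ} (ha : 0 < a) (n : ℕ) : 0 < poch a n :=
  Finset.prod_pos fun _ _ => by positivity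

lemma poch_one (n : ℕ) : poch 1 n = n ! := by
  induction n with
  | zero => simp [poch]
  | succ n ih => rw [poch_succ, ih, Nat.factorial_succ]; push_cast; ring

lemma poch_two (n : ℕ) : poch 2 n = (n + 1)! := by
  induction n with
  | zero => simp [poch]
  | succ n ih => rw [poch_succ, ih, Nat.factorial_succ (n + 1)]; push_cast; ring

lemma poch_mul_add (a : ℝ) (n : ℕ) : poch a n * (a + n) = a * poch (a + 1) n := by
  induction n with
  | zero => simp [poch]
  | succ n ih =>
    rw [poch_succ a, poch_succ (a + 1)]
    push_cast
    linear_combination (a + n + 1) * ih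

lemma poch_three_halves_mul (n : ℕ) : poch (3 / 2) n * 4 ^ n * n ! = (2 * n + 1)! := by
  induction n with
  | zero => simp [poch]
  | succ n ih =>
    rw [poch_succ, show 2 * (n + 1) + 1 = 2 * n + 1 + 1 + 1 by ring,
      Nat.factorial_succ, Nat.factorial_succ, Nat.factorial_succ]
    push_cast
    linear_combination ((3 / 2 + n) * 4 * (n + 1)) * ih

lemma poch_div_poch_add_one {a : ℝ} (ha : 0 < a) (n : ℕ) :
    poch a n / poch (a + 1) n = a / (a + n) := by
  rw [div_eq_div_iff (poch_pos (by linarith) n).ne' (by positivity)]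
  exact poch_mul_add a n

lemma hypergeom22_term_eq {e : ℝ} (he : 0 < e) (w : ℝ) (n : ℕ) :
    poch 1 n * poch e n / (poch 2 n * poch (e + 1) n) * w ^ n / n ! =
      e / ((e + n) * (n + 1)!) * w ^ n := by
  have hratio := poch_div_poch_add_one he n
  have hpos : 0 < poch (e + 1) n := poch_pos (by linarith) n
  rw [poch_one, poch_two, Nat.factorial_succ]
  field_simp at hratio ⊢
  linear_combination w ^ n * hratio

lemma hypergeom12_term_eq {c : ℝ} (hc : 0 < c) (z : ℝ) (k : ℕ) :
    poch c k / (poch (c + 1) k * poch (3 / 2) k) * (z ^ 2 / 4) ^ k / k ! =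
      c / ((c + k) * (2 * k + 1)!) * z ^ (2 * k) := by
  have hratio := poch_div_poch_add_one hc k
  have hfac := poch_three_halves_mul k
  have hpos : 0 < poch (c + 1) k := poch_pos (by linarith) k
  have hpos' : 0 < poch (3 / 2) k := poch_pos (by norm_num) k
  rw [← hfac, div_pow, pow_mul]
  field_simp at hratio ⊢
  linear_combination (z ^ 2) ^ k * hratio

lemma summable_hypergeom22_term {e : ℝ} (he : 0 < e) (w : ℝ) :
    Summable fun n : ℕ => e / ((e + n) * (n + 1)!) * w ^ n := by
  refine .of_norm_bounded (Real.summable_pow_div_factorial ‖w‖) fun n => ?_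
  rw [norm_mul, norm_pow, Real.norm_of_nonneg (by positivity), div_eq_mul_one_div (‖w‖ ^ n),
    mul_comm]
  refine mul_le_mul_of_nonneg_left ?_ (by positivity)
  rw [div_le_div_iff₀ (by positivity) (by positivity), Nat.factorial_succ]
  push_cast
  have hn : (0 : ℝ) ≤ n := n.cast_nonneg
  have : e ≤ (e + n) * (n + 1) := by nlinarith
  nlinarith [mul_le_mul_of_nonneg_right this (n !).cast_nonneg]

lemma tsum_add_tsum_neg_eq_two_mul_tsum_even (a : ℕ → ℝ) (w : ℝ)
    (h₁ : Summable fun n => a n * w ^ n) (h₂ : Summable fun n => a n * (-w) ^ n) :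
    ∑' n, a n * w ^ n + ∑' n, a n * (-w) ^ n = 2 * ∑' k, a (2 * k) * w ^ (2 * k) := by
  have hodd : ∀ n, n ∉ Set.range (2 * ·) → a n * w ^ n + a n * (-w) ^ n = 0 := by
    intro n hn
    have : Odd n := Nat.not_even_iff_odd.mp fun ⟨m, hm⟩ => hn ⟨m, show 2 * m = n by omega⟩
    rw [this.neg_pow]
    ring
  rw [← h₁.tsum_add h₂, ← tsum_mul_left,
    ← (mul_right_injective₀ two_ne_zero).tsum_eq fun n hn => by_contra fun h => hn (hodd n h)]
  refine tsum_congr fun k => ?_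
  rw [(even_two_mul k).neg_pow]
  ring

theorem stmt_19_general (β α l : ℝ) (hβ : 1 ≤ β) (hα : α < β + 1)
    (c e : ℝ) (hc : c = -α / (2 * β) + 1 / (2 * β) + 1 / 2) (he : e = 2 * c)
    (x : ℝ) (hx : 0 < x) :
    (∑' n : ℕ, poch c n / (poch (c + 1) n * poch (3/2) n) *
        (l ^ 2 * x ^ (2 * β) / 4) ^ n / (n.factorial : ℝ))
      = (1 / 2) *
        ((∑' n : ℕ, poch 1 n * poch e n / (poch 2 n * poch (e + 1) n) *
            (l * x ^ β) ^ n / (n.factorial : ℝ)) +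
          ∑' n : ℕ, poch 1 n * poch e n / (poch 2 n * poch (e + 1) n) *
            (-(l * x ^ β)) ^ n / (n.factorial : ℝ)) := by
  have hc0 : 0 < c := by
    rw [hc, show -α / (2 * β) + 1 / (2 * β) + 1 / 2 = (β + 1 - α) / (2 * β) by field_simp; ring]
    apply _root_.div_pos <;> linarith
  have he0 : 0 < e := by linarith
  set z := l * x ^ β
  have hz : l ^ 2 * x ^ (2 * β) / 4 = z ^ 2 / 4 := by
    rw [mul_comm 2 β, Real.rpow_mul hx.le, Real.rpow_two]
    ring
  simp only [hz, hypergeom12_term_eq hc0, hypergeom22_term_eq he0]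
  rw [tsum_add_tsum_neg_eq_two_mul_tsum_even _ z (summable_hypergeom22_term he0 z)
    (summable_hypergeom22_term he0 (-z))]
  subst he
  push_cast
  rw [← mul_assoc, one_div_mul_cancel two_ne_zero, one_mul]
  refine tsum_congr fun k => ?_
  rw [show 2 * c + 2 * k = 2 * (c + k) by ring, mul_assoc, mul_div_mul_left _ _ two_ne_zero]

theorem stmt_19 (β α l : ℝ) (hβ : 1 ≤ β) (hα : α < β + 1) (hl : l ≠ 0)
    (c e : ℝ) (hc : c = -α / (2 * β) + 1 / (2 * β) + 1 / 2) (he : e = 2 * c)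
    (x : ℝ) (hx : 0 < x) :
    (∑' n : ℕ, poch c n / (poch (c + 1) n * poch (3/2) n) *
        (l ^ 2 * x ^ (2 * β) / 4) ^ n / (n.factorial : ℝ))
      = (1 / 2) *
        ((∑' n : ℕ, poch 1 n * poch e n / (poch 2 n * poch (e + 1) n) *
            (l * x ^ β) ^ n / (n.factorial : ℝ)) +
          ∑' n : ℕ, poch 1 n * poch e n / (poch 2 n * poch (e + 1) n) *
            (-(l * x ^ β)) ^ n / (n.factorial : ℝ)) :=
  stmt_19_general β α l hβ hα c e hc he x hx
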